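/- arXiv:2306.13673 — 4 statements merged into one kernel-verified Lean document; each statement's English description precedes it below -/
import Mathlib

section
/- Let A be a finite set of actions of size k over facilities F, ω a probability distribution on A with q(f) = ∑_{a∋f} ω(a), a* ∼ ω, and R(f) ∈ [0,1]. Define ỹ(f) = 1 − 𝟙{f∈a*}(1−R(f))/q(f) for q(f) > 0 (and ỹ(f) arbitrary, say 1, when q(f)=0). Then E_{a*∼ω}[ ∑_{a∈A} ω(a) (∑_{f∈a} ỹ(f))² ] ≤ k + k|F|. -/
/-!
By Cauchy–Schwarz, `(∑_{f∈a} ỹ f)² ≤ k ∑_{f∈a} ỹ f²`, and averaging over `a ∼ ω` turns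
`∑_a ω a ∑_{f∈a}` into `∑_{f∈F} q f`. So it suffices that each facility contributes
`q f · E[ỹ f²] ≤ 1`: with `t = 1 - R f`, the importance-weighted estimate has
`E[ỹ f²] = 1 - 2t + t²/q f`, and `q - 2qt + t² ≤ 1` for `q, t ∈ [0, 1]`. Summing gives `k |F|`.
-/

open Finset

theorem Finset.sum_mul_sum_eq_sum_filter_mem_mul {β R : Type*} [DecidableEq β]
    [NonUnitalNonAssocSemiring R] (F : Finset β) (A : Finset (Finset β)) (hA : ∀ a ∈ A, a ⊆ F)
    (ω : Finset β → R) (c : β → R) :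
    ∑ a ∈ A, ω a * ∑ f ∈ a, c f = ∑ f ∈ F, (∑ a ∈ A with f ∈ a, ω a) * c f := by
  simp only [mul_sum, sum_mul]
  refine sum_comm' fun a f => ?_
  simp only [mem_filter]
  exact ⟨fun ⟨ha, hf⟩ => ⟨⟨ha, hf⟩, hA a ha hf⟩, fun ⟨⟨ha, hf⟩, _⟩ => ⟨ha, hf⟩⟩

theorem Finset.sum_mul_sq_sum_le_mul_sum_filter_mem_mul_sq {β : Type*} [DecidableEq β]
    (F : Finset β) (A : Finset (Finset β)) (k : ℕ) (hA : ∀ a ∈ A, a ⊆ F)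
    (hcard : ∀ a ∈ A, a.card ≤ k) (ω : Finset β → ℝ) (hω : ∀ a ∈ A, 0 ≤ ω a) (c : β → ℝ) :
    ∑ a ∈ A, ω a * (∑ f ∈ a, c f) ^ 2 ≤ k * ∑ f ∈ F, (∑ a ∈ A with f ∈ a, ω a) * c f ^ 2 := by
  calc ∑ a ∈ A, ω a * (∑ f ∈ a, c f) ^ 2
      ≤ ∑ a ∈ A, ω a * (k * ∑ f ∈ a, c f ^ 2) := by
        refine sum_le_sum fun a ha => mul_le_mul_of_nonneg_left ?_ (hω a ha)
        calc (∑ f ∈ a, c f) ^ 2 ≤ a.card * ∑ f ∈ a, c f ^ 2 := sq_sum_le_card_mul_sum_sq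
          _ ≤ k * ∑ f ∈ a, c f ^ 2 := by
            gcongr
            exact hcard a ha
    _ = k * ∑ f ∈ F, (∑ a ∈ A with f ∈ a, ω a) * c f ^ 2 := by
        rw [← sum_mul_sum_eq_sum_filter_mem_mul F A hA, mul_sum]
        exact sum_congr rfl fun a _ => by ring

theorem Finset.sum_mul_sq_one_sub_ite_div {α K : Type*} [Field K] (A : Finset α) (ω : α → K)
    (P : α → Prop) [DecidablePred P] (t : K) (hp : ∑ a ∈ A with P a, ω a ≠ 0) :
    ∑ a ∈ A, ω a * (1 - (if P a then 1 else 0) * t / ∑ b ∈ A with P b, ω b) ^ 2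
      = ∑ a ∈ A, ω a - 2 * t + t ^ 2 / ∑ a ∈ A with P a, ω a := by
  set p := ∑ a ∈ A with P a, ω a
  have hterm : ∀ a, ω a * (1 - (if P a then 1 else 0) * t / p) ^ 2
      = ω a + (if P a then ω a else 0) * (t ^ 2 / p ^ 2 - 2 * t / p) := fun a => by
    split_ifs <;> ring
  rw [sum_congr rfl fun a _ => hterm a, sum_add_distrib, ← sum_mul, ← sum_filter]
  field_simp
  ring

theorem marginal_mul_sum_mul_sq_importance_estimate_le_one {β : Type*} [DecidableEq β]
    (A : Finset (Finset β)) (ω : Finset β → ℝ) (hω : ∀ a ∈ A, 0 ≤ ω a)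
    (hsum : ∑ a ∈ A, ω a = 1) (f : β) (r : ℝ) (hr : r ∈ Set.Icc (0 : ℝ) 1) :
    (∑ a ∈ A with f ∈ a, ω a) * ∑ astar ∈ A, ω astar *
      (if ∑ a ∈ A with f ∈ a, ω a = 0 then 1 else
        1 - (if f ∈ astar then (1 : ℝ) else 0) * (1 - r) / ∑ a ∈ A with f ∈ a, ω a) ^ 2 ≤ 1 := by
  set q := ∑ a ∈ A with f ∈ a, ω a
  by_cases hq : q = 0
  · simp [hq]
  have hq0 : 0 ≤ q := sum_nonneg fun a ha => hω a (mem_filter.mp ha).1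
  have hq1 : q ≤ 1 := hsum ▸ sum_le_sum_of_subset_of_nonneg (filter_subset _ _)
    fun a ha _ => hω a ha
  obtain ⟨hr0, hr1⟩ := hr
  simp only [hq, if_false]
  rw [sum_mul_sq_one_sub_ite_div A ω (f ∈ ·) (1 - r) hq, hsum, mul_add, mul_div_cancel₀ _ hq]
  -- `q - 2 q t + t² ≤ 1` is convex in `t = 1 - r` and holds at both ends of `[0, 1]`.
  nlinarith [mul_nonneg hr0 (sub_nonneg.2 hr1), mul_nonneg (sub_nonneg.2 hr1) (sub_nonneg.2 hq1), mul_nonneg hr0 hq0]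

theorem facility_estimator_variance_bound {β : Type*} [DecidableEq β]
    (F : Finset β) (A : Finset (Finset β)) (k : ℕ)
    (hA : ∀ a ∈ A, a ⊆ F) (hcard : ∀ a ∈ A, a.card = k)
    (ω : Finset β → ℝ) (hω : ∀ a ∈ A, 0 ≤ ω a) (hsum : ∑ a ∈ A, ω a = 1)
    (R : β → ℝ) (hR : ∀ f ∈ F, R f ∈ Set.Icc (0 : ℝ) 1)
    (q : β → ℝ) (hq : ∀ f, q f = ∑ a ∈ A.filter (fun a => f ∈ a), ω a)
    (y : Finset β → β → ℝ)
    (hy : ∀ astar f, y astar f = if q f = 0 then 1 else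
      1 - (if f ∈ astar then (1 : ℝ) else 0) * (1 - R f) / q f) :
    ∑ astar ∈ A, ω astar * ∑ a ∈ A, ω a * (∑ f ∈ a, y astar f) ^ 2
      ≤ (k : ℝ) + (k : ℝ) * (F.card : ℝ) := by
  have hfacility : ∀ f ∈ F, q f * ∑ astar ∈ A, ω astar * y astar f ^ 2 ≤ 1 := fun f hf => by
    simp only [hy, hq]
    exact marginal_mul_sum_mul_sq_importance_estimate_le_one A ω hω hsum f (R f) (hR f hf)
  calc ∑ astar ∈ A, ω astar * ∑ a ∈ A, ω a * (∑ f ∈ a, y astar f) ^ 2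
      ≤ ∑ astar ∈ A, ω astar * (k * ∑ f ∈ F, q f * y astar f ^ 2) := by
        refine sum_le_sum fun astar hastar => mul_le_mul_of_nonneg_left ?_ (hω astar hastar)
        simpa only [← hq] using sum_mul_sq_sum_le_mul_sum_filter_mem_mul_sq F A k hA
          (fun a ha => (hcard a ha).le) ω hω (y astar)
    _ = k * ∑ f ∈ F, q f * ∑ astar ∈ A, ω astar * y astar f ^ 2 := by
        simp only [mul_sum]
        rw [sum_comm]
        exact sum_congr rfl fun f _ => sum_congr rfl fun astar _ => by ring
    _ ≤ k * ∑ _f ∈ F, (1 : ℝ) := by gcongr with f hf; exact hfacility f hf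
    _ ≤ k + k * F.card := by simp
end

section
/- Let w : F → ℝ_{>0} assign positive weights to a finite facility set F ordered so that w(f_1) ≥ w(f_2) ≥ ⋯ ≥ w(f_|F|), let k ≤ |F|, let A be the collection of all k-element subsets of F, and let a* = {f_1,…,f_k}. Then ∏_{f∈a*} w(f) / ∑_{a∈A} ∏_{f∈a} w(f) ≥ ∏_{m=1}^{k} w(f_m) / (w(f_m) + ∑_{ℓ>k} w(f_ℓ)). -/
/-!
Write `S` for the total weight of the facilities `ℓ ≥ k`. Every `k`-subset `a` splits into its part
`T` below `k` and a `(k - |T|)`-subset of the facilities above `k`, whose monomial is one of the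
terms of `S ^ (k - |T|)`. Hence the expansion of `∏_{m<k} (w m + S)` dominates the elementary
symmetric sum `∑_{|a| = k} ∏_{f∈a} w f`, and dividing `∏_{m<k} w m` by both gives the bound.
-/

namespace Multiset

theorem esymm_cons_succ {R : Type*} [CommSemiring R] (a : R) (s : Multiset R) (j : ℕ) :
    (a ::ₘ s).esymm (j + 1) = s.esymm (j + 1) + a * s.esymm j := by
  simp [esymm, map_map, sum_map_mul_left]

variable {R : Type*} [CommSemiring R] [PartialOrder R] [IsOrderedRing R]

theorem esymm_le_sum_pow {s : Multiset R} (hs : ∀ x ∈ s, 0 ≤ x) (j : ℕ) :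
    s.esymm j ≤ s.sum ^ j := by
  induction s using Multiset.induction_on generalizing j with
  | empty => cases j <;> simp [esymm, powersetCard_zero_right]
  | cons a s ih =>
    have ha : 0 ≤ a := hs a (mem_cons_self a s)
    have hs' : ∀ x ∈ s, 0 ≤ x := fun x hx => hs x (mem_cons_of_mem hx)
    have hsum : 0 ≤ s.sum := sum_nonneg hs'
    cases j with
    | zero => simp [esymm]
    | succ j =>
      calc (a ::ₘ s).esymm (j + 1) = s.esymm (j + 1) + a * s.esymm j := esymm_cons_succ a s j
        _ ≤ s.sum ^ (j + 1) + a * s.sum ^ j := by gcongr <;> exact ih hs' _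
        _ = s.sum ^ j * (a + s.sum) := by ring
        _ ≤ (a + s.sum) ^ j * (a + s.sum) := by gcongr; exact le_add_of_nonneg_left ha
        _ = (a ::ₘ s).sum ^ (j + 1) := by rw [sum_cons, pow_succ]

theorem esymm_add_le {s t : Multiset R} (hs : ∀ x ∈ s, 0 ≤ x) (ht : ∀ x ∈ t, 0 ≤ x)
    {j : ℕ} (hj : card s ≤ j) :
    (s + t).esymm j ≤ t.sum ^ (j - card s) * (s.map (· + t.sum)).prod := by
  induction s using Multiset.induction_on generalizing j with
  | empty => simpa using esymm_le_sum_pow ht j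
  | cons a s ih =>
    have ha : 0 ≤ a := hs a (mem_cons_self a s)
    have hs' : ∀ x ∈ s, 0 ≤ x := fun x hx => hs x (mem_cons_of_mem hx)
    obtain ⟨i, rfl⟩ : ∃ i, j = i + 1 := Nat.exists_eq_add_one.2 (by simp at hj; omega)
    have hi : card s ≤ i := by simpa using hj
    obtain ⟨d, rfl⟩ := Nat.exists_eq_add_of_le hi
    set P := (s.map (· + t.sum)).prod
    calc (a ::ₘ s + t).esymm (card s + d + 1)
        = (s + t).esymm (card s + d + 1) + a * (s + t).esymm (card s + d) := by
          rw [cons_add, esymm_cons_succ]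
      _ ≤ t.sum ^ (d + 1) * P + a * (t.sum ^ d * P) := by
          gcongr
          · exact ih hs' (by omega) |>.trans_eq (by congr 2; omega)
          · exact ih hs' (by omega) |>.trans_eq (by simp)
      _ = t.sum ^ (card s + d + 1 - card (a ::ₘ s)) * ((a ::ₘ s).map (· + t.sum)).prod := by
          rw [card_cons, map_cons, prod_cons, show card s + d + 1 - (card s + 1) = d by omega]
          ring

end Multiset

open Finset

theorem range_val_map_eq_add_filter_le {M : Type*} (f : ℕ → M) {k n : ℕ} (hk : k ≤ n) :
    (range n).val.map f = (range k).val.map f + ((range n).filter (k ≤ ·)).val.map f := by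
  have hlow : (range n).filter (· < k) = range k := by ext; simp; omega
  rw [← hlow, ← Multiset.map_add, filter_val, filter_val]
  simp_rw [← not_lt, Multiset.filter_add_not]

theorem exp_weights_product_lower_bound_general (n k : ℕ) (hk : k ≤ n)
    (w : ℕ → ℝ) (hw : ∀ i < n, 0 < w i) :
    (∏ f ∈ Finset.range k, w f) /
        (∑ a ∈ (Finset.range n).powersetCard k, ∏ f ∈ a, w f)
      ≥ ∏ m ∈ Finset.range k,
          w m / (w m + ∑ ℓ ∈ (Finset.range n).filter (fun ℓ => k ≤ ℓ), w ℓ) := by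
  set L := (range n).filter (fun ℓ => k ≤ ℓ) with hL
  have hk_pos : ∀ m ∈ range k, 0 < w m := fun m hm => hw m ((mem_range.1 hm).trans_le hk)
  have hk_nonneg : ∀ x ∈ (range k).val.map w, 0 ≤ x := by
    simpa using fun m hm => (hk_pos m (mem_range.2 hm)).le
  have hL_nonneg : ∀ x ∈ L.val.map w, 0 ≤ x := by
    simp only [Multiset.mem_map]
    rintro _ ⟨i, hi, rfl⟩
    exact (hw i (mem_range.1 (mem_filter.1 hi).1)).le
  have hsum_le : ∑ a ∈ (range n).powersetCard k, ∏ f ∈ a, w f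
      ≤ ∏ m ∈ range k, (w m + ∑ ℓ ∈ L, w ℓ) := by
    rw [← esymm_map_val, range_val_map_eq_add_filter_le w hk, ← hL]
    simpa [Multiset.map_map, prod_eq_multiset_prod] using
      Multiset.esymm_add_le hk_nonneg hL_nonneg (j := k) (by simp)
  have hsum_pos : 0 < ∑ a ∈ (range n).powersetCard k, ∏ f ∈ a, w f :=
    sum_pos' (fun a ha => prod_nonneg fun f hf =>
        (hw f (mem_range.1 ((mem_powersetCard.1 ha).1 hf))).le)
      ⟨range k, mem_powersetCard.2 ⟨range_subset_range.2 hk, card_range k⟩, prod_pos hk_pos⟩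
  rw [ge_iff_le, prod_div_distrib]
  exact div_le_div_of_nonneg_left (prod_pos hk_pos).le hsum_pos hsum_le

theorem exp_weights_product_lower_bound (n k : ℕ) (hk : k ≤ n)
    (w : ℕ → ℝ) (hw : ∀ i < n, 0 < w i)
    (hmono : ∀ i j, i ≤ j → j < n → w j ≤ w i) :
    (∏ f ∈ Finset.range k, w f) /
        (∑ a ∈ (Finset.range n).powersetCard k, ∏ f ∈ a, w f)
      ≥ ∏ m ∈ Finset.range k,
          w m / (w m + ∑ ℓ ∈ (Finset.range n).filter (fun ℓ => k ≤ ℓ), w ℓ) :=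
  exp_weights_product_lower_bound_general n k hk w hw
end

section
/- Let F be a finite facility set, k ≤ |F|, and let the action set A be all k-subsets of F. Suppose cumulative relative scores satisfy z^t(a) ≤ −M − ηεt for all a ≠ a*, where z^t(a) = ∑_{f∈a} Y^t(f) − ∑_{f∈a*} Y^t(f) for some facility scores Y^t : F → ℝ scaled by η. Then the exponential-weights distribution ω^t(a) ∝ ∏_{f∈a} exp(Y^t(f)) satisfies ‖ω^t − δ_{a*}‖_1 ≤ 2 k |F| exp(−M − ηεt). -/
/-!
Exchanging a facility `f ∉ a*` for a facility `g ∈ a*` turns `a*` into another action, so the gap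
hypothesis gives `Y f - Y g ≤ -M - ηεt`. Every action `a ≠ a*` contains such an `f` and misses such
a `g`, and exchanging them shows that its weight is at most `exp (-M - ηεt)` times the weight of
another action; for a fixed pair `(f, g)` this exchange is injective. Summing over the at most
`k |F|` pairs bounds the off-optimal mass `1 - ω a*` by `k |F| exp (-M - ηεt)`, and the `L¹`
distance to `δ_{a*}` is twice that mass.
-/

open Finset

namespace Finset

lemma sum_comp_le_sum_of_injOn {ι κ M : Type*} [AddCommMonoid M] [PartialOrder M]
    [IsOrderedAddMonoid M] [DecidableEq κ] {s : Finset ι} {t : Finset κ} {e : ι → κ}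
    (g : κ → M) (he : Set.InjOn e s) (hest : Set.MapsTo e s t) (hg : ∀ j ∈ t, 0 ≤ g j) :
    ∑ i ∈ s, g (e i) ≤ ∑ j ∈ t, g j := by
  rw [← sum_image he]
  exact sum_le_sum_of_subset_of_nonneg (image_subset_iff.2 hest) fun j hj _ => hg j hj

lemma sum_abs_sub_indicator_eq {α : Type*} [DecidableEq α] {s : Finset α} {p : α → ℝ} {a : α}
    (ha : a ∈ s) (hp : ∀ b ∈ s, 0 ≤ p b) (hsum : ∑ b ∈ s, p b = 1) :
    ∑ b ∈ s, |p b - if b = a then 1 else 0| = 2 * ∑ b ∈ s.erase a, p b := by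
  rw [← add_sum_erase _ _ ha] at hsum ⊢
  have hrest : ∑ b ∈ s.erase a, |p b - if b = a then 1 else 0| = ∑ b ∈ s.erase a, p b :=
    sum_congr rfl fun b hb => by
      rw [if_neg (ne_of_mem_erase hb), sub_zero, abs_of_nonneg (hp b (mem_of_mem_erase hb))]
  have hpa : p a ≤ 1 := by
    linarith [sum_nonneg fun b (hb : b ∈ s.erase a) => hp b (mem_of_mem_erase hb)]
  rw [hrest, if_pos rfl, abs_of_nonpos (by linarith)]
  linarith

end Finset

section Exchange

variable {β : Type*} [DecidableEq β] {F a b : Finset β} {k : ℕ} {f g : β}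

lemma insert_erase_mem_powersetCard (ha : a ∈ F.powersetCard k) (hf : f ∈ a) (hgF : g ∈ F)
    (hga : g ∉ a) : insert g (a.erase f) ∈ F.powersetCard k := by
  obtain ⟨haF, hak⟩ := mem_powersetCard.1 ha
  have hg : g ∉ a.erase f := fun h => hga (mem_of_mem_erase h)
  refine mem_powersetCard.2 ⟨insert_subset hgF ((erase_subset f a).trans haF), ?_⟩
  rw [card_insert_of_notMem hg, card_erase_of_mem hf, hak]
  have : 0 < k := hak ▸ card_pos.2 ⟨f, hf⟩
  omega

lemma sum_insert_erase {M : Type*} [AddCommGroup M] (Y : β → M) (hf : f ∈ a) (hga : g ∉ a) :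
    ∑ x ∈ insert g (a.erase f), Y x = ∑ x ∈ a, Y x - Y f + Y g := by
  rw [sum_insert fun h => hga (mem_of_mem_erase h), sum_erase_eq_sub hf]
  abel

lemma injOn_insert_erase :
    Set.InjOn (fun a : Finset β => insert g (a.erase f)) {a | f ∈ a ∧ g ∉ a} := by
  rintro a ⟨hfa, hga⟩ b ⟨hfb, hgb⟩ hab
  have recover : ∀ c : Finset β, f ∈ c → g ∉ c → insert f ((insert g (c.erase f)).erase g) = c :=
    fun c hfc hgc => by
      rw [erase_insert fun h => hgc (mem_of_mem_erase h), insert_erase hfc]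
  rw [← recover a hfa hga, ← recover b hfb hgb]
  exact congrArg (fun c => insert f (c.erase g)) hab

lemma exists_exchange_of_mem_powersetCard (ha : a ∈ F.powersetCard k)
    (hb : b ∈ F.powersetCard k) (hab : a ≠ b) : ∃ f ∈ a, f ∉ b ∧ ∃ g ∈ b, g ∉ a := by
  have hcard : #a = #b := by rw [(mem_powersetCard.1 ha).2, (mem_powersetCard.1 hb).2]
  obtain ⟨f, hf⟩ := sdiff_nonempty.2 fun h => hab (eq_of_subset_of_card_le h hcard.ge)
  obtain ⟨g, hg⟩ := sdiff_nonempty.2 fun h => hab (eq_of_subset_of_card_le h hcard.le).symm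
  exact ⟨f, (mem_sdiff.1 hf).1, (mem_sdiff.1 hf).2, g, (mem_sdiff.1 hg).1, (mem_sdiff.1 hg).2⟩

theorem sum_erase_le_of_exchange {φ : Finset β → ℝ} {c : ℝ} {astar : Finset β}
    (hastar : astar ∈ F.powersetCard k) (hφ : ∀ a ∈ F.powersetCard k, 0 ≤ φ a) (hc : 0 ≤ c)
    (hexch : ∀ a ∈ F.powersetCard k, ∀ f ∈ a, f ∉ astar → ∀ g ∈ astar, g ∉ a →
      φ a ≤ c * φ (insert g (a.erase f))) :
    ∑ a ∈ (F.powersetCard k).erase astar, φ a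
      ≤ #(F \ astar) * #astar * c * ∑ a ∈ F.powersetCard k, φ a := by
  set s := F.powersetCard k
  set P := (F \ astar) ×ˢ astar
  have hcover : ∀ a ∈ s.erase astar,
      φ a ≤ ∑ p ∈ P, if p.1 ∈ a ∧ p.2 ∉ a then φ a else 0 := by
    intro a ha
    obtain ⟨hne, has⟩ := mem_erase.1 ha
    obtain ⟨f, hfa, hf, g, hg, hga⟩ := exists_exchange_of_mem_powersetCard has hastar hne
    have hfg : (f, g) ∈ P :=
      mem_product.2 ⟨mem_sdiff.2 ⟨(mem_powersetCard.1 has).1 hfa, hf⟩, hg⟩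
    calc φ a = if (f, g).1 ∈ a ∧ (f, g).2 ∉ a then φ a else 0 := (if_pos ⟨hfa, hga⟩).symm
      _ ≤ _ := single_le_sum (f := fun p : β × β => if p.1 ∈ a ∧ p.2 ∉ a then φ a else 0)
          (fun p _ => by split_ifs <;> simp [hφ a has]) hfg
  have hpair : ∀ p ∈ P,
      ∑ a ∈ s.erase astar with p.1 ∈ a ∧ p.2 ∉ a, φ a ≤ c * ∑ a ∈ s, φ a := by
    rintro ⟨f, g⟩ hp
    obtain ⟨hf, hg⟩ := mem_product.1 hp
    set t := {a ∈ s.erase astar | f ∈ a ∧ g ∉ a}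
    have hmaps : Set.MapsTo (fun a : Finset β => insert g (a.erase f)) t s := fun a ha => by
      obtain ⟨ha, hfa, hga⟩ := mem_filter.1 ha
      exact insert_erase_mem_powersetCard (mem_of_mem_erase ha) hfa
        ((mem_powersetCard.1 hastar).1 hg) hga
    have hinj : Set.InjOn (fun a : Finset β => insert g (a.erase f)) t :=
      injOn_insert_erase.mono fun a ha => (mem_filter.1 ha).2
    calc ∑ a ∈ t, φ a
        ≤ ∑ a ∈ t, c * φ (insert g (a.erase f)) :=
          sum_le_sum fun a ha => by
            obtain ⟨ha, hfa, hga⟩ := mem_filter.1 ha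
            exact hexch a (mem_of_mem_erase ha) f hfa (mem_sdiff.1 hf).2 g hg hga
      _ = c * ∑ a ∈ t, φ (insert g (a.erase f)) := (mul_sum _ _ _).symm
      _ ≤ c * ∑ a ∈ s, φ a :=
          mul_le_mul_of_nonneg_left (sum_comp_le_sum_of_injOn φ hinj hmaps hφ) hc
  calc ∑ a ∈ s.erase astar, φ a
      ≤ ∑ a ∈ s.erase astar, ∑ p ∈ P, if p.1 ∈ a ∧ p.2 ∉ a then φ a else 0 := sum_le_sum hcover
    _ = ∑ p ∈ P, ∑ a ∈ s.erase astar with p.1 ∈ a ∧ p.2 ∉ a, φ a := by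
      rw [sum_comm]
      simp only [sum_filter]
    _ ≤ ∑ p ∈ P, c * ∑ a ∈ s, φ a := sum_le_sum hpair
    _ = #(F \ astar) * #astar * c * ∑ a ∈ s, φ a := by
      rw [sum_const, card_product, nsmul_eq_mul]
      push_cast
      ring

end Exchange

section Gap

variable {β : Type*} [DecidableEq β] {F astar : Finset β} {k : ℕ} {Y : β → ℝ} {x : ℝ}

lemma sub_le_of_forall_sum_sub_le (hastar : astar ∈ F.powersetCard k)
    (hgap : ∀ a ∈ F.powersetCard k, a ≠ astar → ∑ f ∈ a, Y f - ∑ f ∈ astar, Y f ≤ x)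
    {f g : β} (hf : f ∈ F) (hfa : f ∉ astar) (hg : g ∈ astar) : Y f - Y g ≤ x := by
  have h := hgap _ (insert_erase_mem_powersetCard hastar hg hf hfa)
    fun h => hfa (h ▸ mem_insert_self f _)
  rw [sum_insert_erase Y hg hfa] at h
  linarith

theorem sum_exp_erase_le_of_forall_sum_sub_le (hastar : astar ∈ F.powersetCard k)
    (hgap : ∀ a ∈ F.powersetCard k, a ≠ astar → ∑ f ∈ a, Y f - ∑ f ∈ astar, Y f ≤ x) :
    ∑ a ∈ (F.powersetCard k).erase astar, Real.exp (∑ f ∈ a, Y f)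
      ≤ #(F \ astar) * #astar * Real.exp x * ∑ a ∈ F.powersetCard k, Real.exp (∑ f ∈ a, Y f) :=
  sum_erase_le_of_exchange hastar (fun _ _ => (Real.exp_pos _).le) (Real.exp_pos x).le
    fun a ha f hfa hf g hg hga => by
      rw [← Real.exp_add, Real.exp_le_exp, sum_insert_erase Y hfa hga]
      linarith [sub_le_of_forall_sum_sub_le hastar hgap ((mem_powersetCard.1 ha).1 hfa) hf hg]

end Gap

theorem exp_weights_L1_convergence_general {β : Type*} [DecidableEq β]
    (F : Finset β) (k : ℕ)
    (astar : Finset β) (hastar : astar ∈ F.powersetCard k)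
    (Y : β → ℝ) (M η ε : ℝ) (t : ℕ)
    (hgap : ∀ a ∈ F.powersetCard k, a ≠ astar →
      (∑ f ∈ a, Y f) - (∑ f ∈ astar, Y f) ≤ -M - η * ε * t)
    (ω : Finset β → ℝ)
    (hω : ∀ a, ω a = Real.exp (∑ f ∈ a, Y f)
        / ∑ a' ∈ F.powersetCard k, Real.exp (∑ f ∈ a', Y f)) :
    ∑ a ∈ F.powersetCard k, |ω a - (if a = astar then (1 : ℝ) else 0)|
      ≤ 2 * (k : ℝ) * (F.card : ℝ) * Real.exp (-M - η * ε * t) := by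
  set s := F.powersetCard k
  set Z := ∑ a ∈ s, Real.exp (∑ f ∈ a, Y f)
  have hZ : 0 < Z := sum_pos (fun _ _ => Real.exp_pos _) ⟨astar, hastar⟩
  have hω_sum : ∑ a ∈ s, ω a = 1 := by
    simp only [hω, ← sum_div]
    exact div_self hZ.ne'
  rw [sum_abs_sub_indicator_eq hastar (fun a _ => hω a ▸ by positivity) hω_sum]
  calc 2 * ∑ a ∈ s.erase astar, ω a
      = 2 * ((∑ a ∈ s.erase astar, Real.exp (∑ f ∈ a, Y f)) / Z) := by simp only [hω, sum_div]
    _ ≤ 2 * (#(F \ astar) * #astar * Real.exp (-M - η * ε * t)) := by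
      gcongr 2 * ?_
      rw [div_le_iff₀ hZ]
      exact sum_exp_erase_le_of_forall_sum_sub_le hastar hgap
    _ ≤ 2 * (k : ℝ) * (F.card : ℝ) * Real.exp (-M - η * ε * t) := by
      have hcard : (#(F \ astar) * #astar : ℝ) ≤ k * #F := by
        rw [(mem_powersetCard.1 hastar).2, mul_comm]
        gcongr
        exact sdiff_subset
      rw [mul_assoc 2 (k : ℝ), mul_assoc 2]
      gcongr

theorem exp_weights_L1_convergence {β : Type*} [DecidableEq β]
    (F : Finset β) (k : ℕ) (hk : k ≤ F.card)
    (astar : Finset β) (hastar : astar ∈ F.powersetCard k)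
    (Y : β → ℝ) (M η ε : ℝ) (t : ℕ)
    (hgap : ∀ a ∈ F.powersetCard k, a ≠ astar →
      (∑ f ∈ a, Y f) - (∑ f ∈ astar, Y f) ≤ -M - η * ε * t)
    (ω : Finset β → ℝ)
    (hω : ∀ a, ω a = Real.exp (∑ f ∈ a, Y f)
        / ∑ a' ∈ F.powersetCard k, Real.exp (∑ f ∈ a', Y f)) :
    ∑ a ∈ F.powersetCard k, |ω a - (if a = astar then (1 : ℝ) else 0)|
      ≤ 2 * (k : ℝ) * (F.card : ℝ) * Real.exp (-M - η * ε * t) :=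
  exp_weights_L1_convergence_general F k astar hastar Y M η ε t hgap ω hω
end

section
/- Consider an n-player game that is (λ, μ)-smooth, i.e., there exists a joint action a* such that ∑_{i=1}^n r_i(a_i*, a_{-i}) ≥ λ·OPT − μ·W(a) for all joint actions a, where W(a) = ∑_i r_i(a) and OPT = max_a W(a). If each player i's sequence of mixed strategies ω^1,…,ω^T has individual regret at most R_i(T) = max_{ω_i} ∑_t (r_i(ω_i, ω_{-i}^t) − r_i(ω_i^t, ω_{-i}^t)), then (1/T) ∑_{t=1}^T W(ω^t) ≥ (λ/(1+μ))·OPT − (1/(T(1+μ))) ∑_{i=1}^n R_i(T). -/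
/-! Let every player deviate to its component of the smoothness witness `a*`. Averaging the
smoothness inequality over the product distribution `ω t` gives
`λ·OPT - μ·W(ω t) ≤ ∑ i, r_i(a*_i, ω t_{-i})`. Summing over `t` and bounding each player's total
deviation gain by `R i` yields `T·λ·OPT - μ·∑ₜ W(ω t) ≤ ∑ₜ W(ω t) + ∑ i, R i`, which rearranges to
the claim. -/

/-- Expected reward of player `i` under a mixed profile `ω`, with player `i`'s
strategy replaced by the mixed strategy `σ`. -/
noncomputable def devReward {n : ℕ} {A : Fin n → Type*} [∀ i, Fintype (A i)]
    [DecidableEq (Fin n)] (r : Fin n → (∀ i, A i) → ℝ) (i : Fin n)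
    (σ : A i → ℝ) (ω : ∀ j, A j → ℝ) : ℝ :=
  ∑ a : ∀ j, A j,
    (∏ j, if h : j = i then σ (h ▸ a j) else ω j (a j)) * r i a

/-- Expected reward of player `i` under the mixed profile `ω`. -/
noncomputable def mixReward {n : ℕ} {A : Fin n → Type*} [∀ i, Fintype (A i)]
    (r : Fin n → (∀ i, A i) → ℝ) (i : Fin n) (ω : ∀ j, A j → ℝ) : ℝ :=
  ∑ a : ∀ j, A j, (∏ j, ω j (a j)) * r i a

section ProductWeights

open Finset

variable {ι : Type*} [DecidableEq ι] {A : ι → Type*}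

theorem update_piSplitAt_symm (i : ι) (b c : A i) (f : ∀ j : {j // j ≠ i}, A j) :
    Function.update ((Equiv.piSplitAt i A).symm (c, f)) i b =
      (Equiv.piSplitAt i A).symm (b, f) := by
  ext j
  by_cases h : j = i
  · subst h; simp [Equiv.piSplitAt_symm_apply]
  · simp [Equiv.piSplitAt_symm_apply, h]

variable [Fintype ι] [∀ i, Fintype (A i)]

theorem sum_prod_eq_one {ω : ∀ i, A i → ℝ} (hω : ∀ i, ∑ b, ω i b = 1) :
    ∑ a : ∀ i, A i, ∏ i, ω i (a i) = 1 := by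
  rw [← Fintype.prod_sum]
  simp [hω]

theorem sum_prod_mul_eq_sum_splitAt (i : ι) (v : ∀ j, A j → ℝ) (g : (∀ j, A j) → ℝ) :
    ∑ a : ∀ j, A j, (∏ j, v j (a j)) * g a =
      ∑ c : A i, v i c * ∑ f : ∀ j : {j // j ≠ i}, A j,
        (∏ j : {j // j ≠ i}, v j (f j)) * g ((Equiv.piSplitAt i A).symm (c, f)) := by
  rw [← (Equiv.piSplitAt i A).symm.sum_comp, Fintype.sum_prod_type]
  refine sum_congr rfl fun c _ => ?_
  rw [mul_sum]
  refine sum_congr rfl fun f _ => ?_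
  have hrest : ∀ j : {j // j ≠ i}, (Equiv.piSplitAt i A).symm (c, f) j = f j := fun j => by
    simp [Equiv.piSplitAt_symm_apply, j.2]
  have hi : (Equiv.piSplitAt i A).symm (c, f) i = c := by simp
  rw [Fintype.prod_eq_mul_prod_subtype_ne _ i, hi, mul_assoc]
  simp only [hrest]

theorem sum_prod_update_single_mul_eq {ω : ∀ j, A j → ℝ} (i : ι) (hω : ∑ c, ω i c = 1) (b : A i)
    [DecidableEq (A i)] (g : (∀ j, A j) → ℝ) :
    ∑ a : ∀ j, A j, (∏ j, Function.update ω i (Pi.single b 1) j (a j)) * g a =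
      ∑ a : ∀ j, A j, (∏ j, ω j (a j)) * g (Function.update a i b) := by
  rw [sum_prod_mul_eq_sum_splitAt i, sum_prod_mul_eq_sum_splitAt i]
  simp only [update_piSplitAt_symm, ← sum_mul, hω, one_mul]
  have hrest : ∀ j : {j // j ≠ i}, Function.update ω i (Pi.single b 1) j = ω j :=
    fun j => Function.update_of_ne j.2 _ _
  simp [hrest, Pi.single_apply]

end ProductWeights

section Game

open Finset

variable {n : ℕ} {A : Fin n → Type*} [∀ i, Fintype (A i)]

theorem devReward_eq_mixReward_update (r : Fin n → (∀ i, A i) → ℝ) (i : Fin n) (σ : A i → ℝ)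
    (ω : ∀ j, A j → ℝ) :
    devReward r i σ ω = mixReward r i (Function.update ω i σ) := by
  unfold devReward mixReward
  refine sum_congr rfl fun a _ => ?_
  congr 1
  refine prod_congr rfl fun j _ => ?_
  by_cases h : j = i
  · subst h; simp
  · simp [h]

theorem devReward_single (r : Fin n → (∀ i, A i) → ℝ) (i : Fin n) [DecidableEq (A i)] (b : A i)
    {ω : ∀ j, A j → ℝ} (hω : ∑ c, ω i c = 1) :
    devReward r i (Pi.single b 1) ω =
      ∑ a : ∀ j, A j, (∏ j, ω j (a j)) * r i (Function.update a i b) := by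
  rw [devReward_eq_mixReward_update, mixReward, sum_prod_update_single_mul_eq i hω]

theorem sum_mixReward (r : Fin n → (∀ i, A i) → ℝ) (ω : ∀ j, A j → ℝ) :
    ∑ i, mixReward r i ω = ∑ a : ∀ j, A j, (∏ j, ω j (a j)) * ∑ i, r i a := by
  simp only [mixReward, mul_sum]
  exact sum_comm

theorem le_sum_devReward_of_smooth (r : Fin n → (∀ i, A i) → ℝ) [∀ i, DecidableEq (A i)]
    {lam mu OPT : ℝ} {astar : ∀ i, A i}
    (hsmooth : ∀ a : ∀ i, A i,
      ∑ i, r i (Function.update a i (astar i)) ≥ lam * OPT - mu * ∑ i, r i a)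
    {ω : ∀ i, A i → ℝ} (hω0 : ∀ i a, 0 ≤ ω i a) (hω1 : ∀ i, ∑ a, ω i a = 1) :
    lam * OPT - mu * ∑ i, mixReward r i ω ≤ ∑ i, devReward r i (Pi.single (astar i) 1) ω :=
  calc lam * OPT - mu * ∑ i, mixReward r i ω
      = ∑ a : ∀ j, A j, (∏ j, ω j (a j)) * (lam * OPT)
          - mu * ∑ a : ∀ j, A j, (∏ j, ω j (a j)) * ∑ i, r i a := by
        rw [← sum_mul, sum_prod_eq_one hω1, one_mul, sum_mixReward]
    _ = ∑ a : ∀ j, A j, (∏ j, ω j (a j)) * (lam * OPT - mu * ∑ i, r i a) := by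
        rw [mul_sum, ← sum_sub_distrib]
        exact sum_congr rfl fun a _ => by ring
    _ ≤ ∑ a : ∀ j, A j, (∏ j, ω j (a j)) * ∑ i, r i (Function.update a i (astar i)) :=
        sum_le_sum fun a _ => mul_le_mul_of_nonneg_left (hsmooth a)
          (prod_nonneg fun j _ => hω0 j (a j))
    _ = ∑ i, devReward r i (Pi.single (astar i) 1) ω := by
        simp only [devReward_single r _ _ (hω1 _), mul_sum]
        exact sum_comm

end Game

open Finset in
theorem welfare_bound_of_smooth_of_regret {ι : Type*} [Fintype ι] {lam mu OPT : ℝ}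
    (hmu : 0 ≤ mu) {T : ℕ} (hT : 1 ≤ T) (M D : ℕ → ι → ℝ) (R : ι → ℝ)
    (hstep : ∀ t, lam * OPT - mu * ∑ i, M t i ≤ ∑ i, D t i)
    (hreg : ∀ i, ∑ t ∈ range T, (D t i - M t i) ≤ R i) :
    (1 / (T : ℝ)) * ∑ t ∈ range T, ∑ i, M t i
      ≥ (lam / (1 + mu)) * OPT - (1 / ((T : ℝ) * (1 + mu))) * ∑ i, R i := by
  set S := ∑ t ∈ range T, ∑ i, M t i with hS
  have hT₀ : (0 : ℝ) < T := by exact_mod_cast hT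
  have hsmooth : T * (lam * OPT) - mu * S ≤ ∑ t ∈ range T, ∑ i, D t i := by
    have := sum_le_sum fun t (_ : t ∈ range T) => hstep t
    rw [sum_sub_distrib, sum_const, card_range, nsmul_eq_mul, ← mul_sum] at this
    exact this
  have hregret : ∑ t ∈ range T, ∑ i, D t i ≤ ∑ i, R i + S := by
    have := sum_le_sum fun i (_ : i ∈ univ) => hreg i
    simp only [sum_sub_distrib] at this
    rw [sum_comm, hS, sum_comm (s := range T)]
    linarith
  calc (lam / (1 + mu)) * OPT - (1 / ((T : ℝ) * (1 + mu))) * ∑ i, R i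
      = (T * (lam * OPT) - ∑ i, R i) / (T * (1 + mu)) := by field_simp
    _ ≤ (1 + mu) * S / (T * (1 + mu)) := by gcongr; linarith
    _ = (1 / (T : ℝ)) * S := by field_simp

theorem smooth_game_welfare_bound_general {n : ℕ} {A : Fin n → Type*}
    [∀ i, Fintype (A i)]
    (r : Fin n → (∀ i, A i) → ℝ)
    (lam mu OPT : ℝ) (hmu : 0 ≤ mu)
    (astar : ∀ i, A i)
    (hsmooth : ∀ a : ∀ i, A i,
      ∑ i, r i (Function.update a i (astar i)) ≥ lam * OPT - mu * ∑ i, r i a)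
    (T : ℕ) (hT : 1 ≤ T)
    (ω : ℕ → ∀ i, A i → ℝ)
    (hω0 : ∀ t i a, 0 ≤ ω t i a) (hω1 : ∀ t i, ∑ a, ω t i a = 1)
    (R : Fin n → ℝ)
    (hreg : ∀ i, ∀ σ : A i → ℝ, (∀ b, 0 ≤ σ b) → (∑ b, σ b = 1) →
      ∑ t ∈ Finset.range T,
          (devReward r i σ (ω t) - mixReward r i (ω t)) ≤ R i) :
    (1 / (T : ℝ)) * ∑ t ∈ Finset.range T, ∑ i, mixReward r i (ω t)
      ≥ (lam / (1 + mu)) * OPT - (1 / ((T : ℝ) * (1 + mu))) * ∑ i, R i := by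
  classical
  exact welfare_bound_of_smooth_of_regret hmu hT (fun t i => mixReward r i (ω t))
    (fun t i => devReward r i (Pi.single (astar i) 1) (ω t)) R
    (fun t => le_sum_devReward_of_smooth r hsmooth (hω0 t) (hω1 t))
    (fun i => hreg i _ (fun b => (Pi.single_nonneg.mpr zero_le_one : (0 : A i → ℝ) ≤ _) b)
      (Fintype.sum_pi_single' _ _))

theorem smooth_game_welfare_bound {n : ℕ} {A : Fin n → Type*}
    [∀ i, Fintype (A i)] [∀ i, Nonempty (A i)]
    (r : Fin n → (∀ i, A i) → ℝ)
    (lam mu OPT : ℝ) (hlam : 0 ≤ lam) (hmu : 0 ≤ mu)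
    (hOPT : IsGreatest (Set.range fun a : ∀ i, A i => ∑ i, r i a) OPT)
    (astar : ∀ i, A i)
    (hsmooth : ∀ a : ∀ i, A i,
      ∑ i, r i (Function.update a i (astar i)) ≥ lam * OPT - mu * ∑ i, r i a)
    (T : ℕ) (hT : 1 ≤ T)
    (ω : ℕ → ∀ i, A i → ℝ)
    (hω0 : ∀ t i a, 0 ≤ ω t i a) (hω1 : ∀ t i, ∑ a, ω t i a = 1)
    (R : Fin n → ℝ)
    (hreg : ∀ i, ∀ σ : A i → ℝ, (∀ b, 0 ≤ σ b) → (∑ b, σ b = 1) →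
      ∑ t ∈ Finset.range T,
          (devReward r i σ (ω t) - mixReward r i (ω t)) ≤ R i) :
    (1 / (T : ℝ)) * ∑ t ∈ Finset.range T, ∑ i, mixReward r i (ω t)
      ≥ (lam / (1 + mu)) * OPT - (1 / ((T : ℝ) * (1 + mu))) * ∑ i, R i :=
  smooth_game_welfare_bound_general r lam mu OPT hmu astar hsmooth T hT ω hω0 hω1 R hreg
end
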